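/- arXiv:2103.03286 — 4 statements merged into one kernel-verified Lean document; each statement's English description precedes it below -/
import Mathlib

section
/- For every ℓ ∈ L and every α ∈ (0,1), ℓ is Lipschitz on [0,α] with Lipschitz constant at most (1-a)/(1-α)², where a = G(ℓ) = 1 - 2∫₀¹ ℓ. -/
open Set

private lemma lorenz_mono {ℓ : ℝ → ℝ}
    (hconv : ConvexOn ℝ (Icc (0:ℝ) 1) ℓ)
    (hmap : ∀ t ∈ Icc (0:ℝ) 1, ℓ t ∈ Icc (0:ℝ) 1)
    (h0 : ℓ 0 = 0) : MonotoneOn ℓ (Icc (0:ℝ) 1) := by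
  intro u hu v hv huv
  rcases eq_or_lt_of_le huv with rfl | huv
  · exact le_refl _
  rcases eq_or_lt_of_le hu.1 with h0u | h0u
  · rw [← h0u, h0]; exact (hmap v hv).1
  · have hs := hconv.slope_mono_adjacent (x := 0) (y := u) (z := v)
      ⟨le_refl _, zero_le_one⟩ hv h0u huv
    rw [h0, sub_zero, sub_zero] at hs
    have h1 : 0 ≤ ℓ u / u := div_nonneg (hmap u hu).1 (le_of_lt h0u)
    have h2 : 0 ≤ (ℓ v - ℓ u) / (v - u) := le_trans h1 hs
    have h3 := mul_nonneg h2 (le_of_lt (sub_pos.mpr huv))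
    rw [div_mul_cancel₀ _ (ne_of_gt (sub_pos.mpr huv))] at h3
    linarith

private lemma lorenz_key {ℓ : ℝ → ℝ} {α : ℝ}
    (hconv : ConvexOn ℝ (Icc (0:ℝ) 1) ℓ)
    (hmap : ∀ t ∈ Icc (0:ℝ) 1, ℓ t ∈ Icc (0:ℝ) 1)
    (h0 : ℓ 0 = 0)
    (hα : α ∈ Ioo (0:ℝ) 1) :
    ∀ x ∈ Icc (0:ℝ) α, ∀ y ∈ Icc (0:ℝ) α, x < y →
      ℓ y - ℓ x ≤ 2 * (∫ t in (0:ℝ)..1, ℓ t) / (1 - α) ^ 2 * (y - x) := by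
  intro x hx y hy hxy
  have hα0 := hα.1
  have hα1 := hα.2
  have hmono := lorenz_mono hconv hmap h0
  have hmonoU : MonotoneOn ℓ (uIcc (0:ℝ) 1) := by
    rwa [uIcc_of_le zero_le_one]
  have hint01 : IntervalIntegrable ℓ MeasureTheory.volume 0 1 :=
    hmonoU.intervalIntegrable
  have hsub1 : uIcc (0:ℝ) α ⊆ uIcc (0:ℝ) 1 := by
    rw [uIcc_of_le zero_le_one, uIcc_of_le hα0.le]
    exact Icc_subset_Icc (le_refl _) hα1.le
  have hsub2 : uIcc α (1:ℝ) ⊆ uIcc (0:ℝ) 1 := by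
    rw [uIcc_of_le zero_le_one, uIcc_of_le hα1.le]
    exact Icc_subset_Icc hα0.le (le_refl _)
  have hint0α : IntervalIntegrable ℓ MeasureTheory.volume 0 α :=
    hint01.mono_set hsub1
  have hintα1 : IntervalIntegrable ℓ MeasureTheory.volume α 1 :=
    hint01.mono_set hsub2
  have hpos : ∀ t ∈ Icc (0:ℝ) 1, (0:ℝ) ≤ ℓ t := fun t ht => (hmap t ht).1
  have hIα : (0:ℝ) ≤ ∫ t in (0:ℝ)..α, ℓ t := by
    apply intervalIntegral.integral_nonneg hα0.le
    intro t ht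
    exact hpos t ⟨ht.1, ht.2.trans hα1.le⟩
  have hsplit : (∫ t in (0:ℝ)..1, ℓ t)
      = (∫ t in (0:ℝ)..α, ℓ t) + ∫ t in α..1, ℓ t :=
    (intervalIntegral.integral_add_adjacent_intervals hint0α hintα1).symm
  -- the case ℓ y ≤ ℓ x
  rcases le_or_gt (ℓ y) (ℓ x) with hle | hlt
  · have hI1 : (0:ℝ) ≤ ∫ t in α..1, ℓ t := by
      apply intervalIntegral.integral_nonneg hα1.le
      intro t ht
      exact hpos t ⟨hα0.le.trans ht.1, ht.2⟩
    have : (0:ℝ) ≤ 2 * (∫ t in (0:ℝ)..1, ℓ t) / (1 - α) ^ 2 * (y - x) := by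
      apply mul_nonneg
      · apply div_nonneg _ (by positivity)
        linarith
      · linarith
    linarith
  -- main case
  set K := (ℓ y - ℓ x) / (y - x) with hK
  have hyx : (0:ℝ) < y - x := sub_pos.mpr hxy
  have hKpos : 0 < K := div_pos (by linarith) hyx
  have hxI : x ∈ Icc (0:ℝ) 1 := ⟨hx.1, hx.2.trans hα1.le⟩
  -- pointwise bound on [α,1]
  have hpt : ∀ s ∈ Icc α 1, K * (s - α) ≤ ℓ s := by
    intro s hs
    rcases eq_or_lt_of_le hs.1 with heq | hαs
    · rw [← heq, sub_self, mul_zero]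
      exact hpos α ⟨hα0.le, hα1.le⟩
    · have hys : y < s := lt_of_le_of_lt hy.2 hαs
      have hsI : s ∈ Icc (0:ℝ) 1 := ⟨hα0.le.trans hs.1, hs.2⟩
      have hslope := hconv.slope_mono_adjacent hxI hsI hxy hys
      have hsy : (0:ℝ) < s - y := sub_pos.mpr hys
      have h1 : K * (s - y) ≤ ℓ s - ℓ y := by
        rw [hK]
        rw [div_le_div_iff₀ hyx hsy] at hslope
        calc (ℓ y - ℓ x) / (y - x) * (s - y)
            = (ℓ y - ℓ x) * (s - y) / (y - x) := by ring
          _ ≤ (ℓ s - ℓ y) * (y - x) / (y - x) := by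
              apply div_le_div_of_nonneg_right _ hyx.le
              linarith
          _ = ℓ s - ℓ y := by field_simp
      have hly : 0 ≤ ℓ y := hpos y ⟨hy.1, hy.2.trans hα1.le⟩
      have h2 : K * (s - α) ≤ K * (s - y) := by
        apply mul_le_mul_of_nonneg_left _ hKpos.le
        linarith [hy.2]
      linarith
  -- integrate
  have hlin : IntervalIntegrable (fun s => K * (s - α)) MeasureTheory.volume α 1 := by
    apply Continuous.intervalIntegrable
    continuity
  have hintmono : (∫ s in α..1, K * (s - α)) ≤ ∫ s in α..1, ℓ s :=
    intervalIntegral.integral_mono_on hα1.le hlin hintα1 hpt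
  have hcomp : (∫ s in α..1, K * (s - α)) = K * ((1 - α) ^ 2 / 2) := by
    rw [intervalIntegral.integral_const_mul]
    have : (∫ s in α..1, (s - α)) = ∫ s in α - α..1 - α, s :=
      intervalIntegral.integral_comp_sub_right (fun s => s) α
    rw [this, integral_id]
    ring_nf
  have hbound : K * ((1 - α) ^ 2 / 2) ≤ ∫ t in (0:ℝ)..1, ℓ t := by
    rw [hsplit]
    linarith [hcomp ▸ hintmono]
  have h1α : (0:ℝ) < (1 - α) ^ 2 := by nlinarith
  have hKle : K ≤ 2 * (∫ t in (0:ℝ)..1, ℓ t) / (1 - α) ^ 2 := by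
    rw [le_div_iff₀ h1α]
    linarith
  calc ℓ y - ℓ x = K * (y - x) := by rw [hK]; field_simp
    _ ≤ 2 * (∫ t in (0:ℝ)..1, ℓ t) / (1 - α) ^ 2 * (y - x) :=
        mul_le_mul_of_nonneg_right hKle hyx.le

/-- For `ℓ ∈ L` (with the convention `ℓ 1 = sup_{[0,1)} ℓ`) and `α ∈ (0,1)`,
`ℓ` is Lipschitz on `[0,α]` with constant at most `(1-a)/(1-α)^2`, where
`a = G(ℓ) = 1 - 2∫₀¹ ℓ` is the Gini index of `ℓ`. -/
theorem lorenz_lipschitzOn (ℓ : ℝ → ℝ) (α a : ℝ)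
    (hconv : ConvexOn ℝ (Icc (0:ℝ) 1) ℓ)
    (hmap : ∀ t ∈ Icc (0:ℝ) 1, ℓ t ∈ Icc (0:ℝ) 1)
    (h0 : ℓ 0 = 0) (h1 : ℓ 1 = sSup (ℓ '' Ico (0:ℝ) 1))
    (hα : α ∈ Ioo (0:ℝ) 1)
    (ha : a = 1 - 2 * ∫ t in (0:ℝ)..1, ℓ t) :
    ∀ x ∈ Icc (0:ℝ) α, ∀ y ∈ Icc (0:ℝ) α,
      |ℓ x - ℓ y| ≤ (1 - a) / (1 - α) ^ 2 * |x - y| := by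
  have hC : (1 - a) = 2 * ∫ t in (0:ℝ)..1, ℓ t := by rw [ha]; ring
  have hmono := lorenz_mono hconv hmap h0
  have key : ∀ x ∈ Icc (0:ℝ) α, ∀ y ∈ Icc (0:ℝ) α, x ≤ y →
      |ℓ x - ℓ y| ≤ (1 - a) / (1 - α) ^ 2 * |x - y| := by
    intro x hx y hy hxy
    have hxI : x ∈ Icc (0:ℝ) 1 := ⟨hx.1, hx.2.trans hα.2.le⟩
    have hyI : y ∈ Icc (0:ℝ) 1 := ⟨hy.1, hy.2.trans hα.2.le⟩
    have hm : ℓ x ≤ ℓ y := hmono hxI hyI hxy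
    rw [abs_sub_comm, abs_of_nonneg (by linarith : (0:ℝ) ≤ ℓ y - ℓ x),
      abs_sub_comm, abs_of_nonneg (by linarith : (0:ℝ) ≤ y - x)]
    rcases eq_or_lt_of_le hxy with rfl | hxy'
    · simp
    · have := lorenz_key hconv hmap h0 hα x hx y hy hxy'
      rw [hC]
      linarith
  intro x hx y hy
  rcases le_total x y with h | h
  · exact key x hx y hy h
  · rw [abs_sub_comm, abs_sub_comm x y]
    exact key y hy x hx h
end

section
/- For each a ∈ [0,1], the set L_a = { ℓ ∈ L : G(ℓ) = a } is a convex set, and it is compact in L¹([0,1]). -/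
open Set MeasureTheory

/-- Membership in the class `L`: convex `ℓ : [0,1] → [0,1]`, `ℓ 0 = 0` and
`ℓ 1 = sup_{[0,1)} ℓ`. -/
def MemLorenz (ℓ : ℝ → ℝ) : Prop :=
  ConvexOn ℝ (Icc (0:ℝ) 1) ℓ ∧ (∀ t ∈ Icc (0:ℝ) 1, ℓ t ∈ Icc (0:ℝ) 1) ∧
    ℓ 0 = 0 ∧ ℓ 1 = sSup (ℓ '' Ico (0:ℝ) 1)

/-- The Gini index `G(ℓ) = 1 - 2∫₀¹ ℓ`. -/
noncomputable def Gini (ℓ : ℝ → ℝ) : ℝ := 1 - 2 * ∫ t in (0:ℝ)..1, ℓ t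

/-!
Convexity: `G` is affine, and the conditions defining Lorenz curves survive convex combinations,
because for a monotone function `ℓ 1 = sup_{[0,1)} ℓ` says exactly that `ℓ` is left continuous
at `1`.

Compactness: `L¹` is complete, so it suffices that `L_a` be totally bounded and closed.
Lorenz curves are monotone with values in `[0,1]`. For such `ℓ` and `x ∈ [k/n, (k+1)/n]`,
`ℓ x - ℓ (k/n)` is bounded by the increment `ℓ x - ℓ (x - 1/n)`, whose integral over `[0,1]`
is at most `1/n`; hence two curves whose values at the grid points `k/n` round down to the same
multiples of `1/n` are `3/n`-close in `L¹`, which is a finite discretization.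
For closedness, an `L¹`-convergent sequence of Lorenz curves has an a.e. convergent subsequence;
the pointwise `limsup` of convex functions is convex, and lowering its value at `1` to its left
limit there gives a Lorenz curve that agrees a.e. with the limit. The Gini condition is closed
because `∫` is continuous on `L¹`.
-/

open Filter Topology Function

theorem ConvexOn.monotoneOn_Icc_of_left_le {f : ℝ → ℝ} {a b : ℝ}
    (hf : ConvexOn ℝ (Icc a b) f) (hmin : ∀ x ∈ Icc a b, f a ≤ f x) : MonotoneOn f (Icc a b) := by
  intro x hx y hy hxy
  rcases hx.1.eq_or_lt with rfl | hax
  · exact hmin y hy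
  · exact hf.le_right_of_left_le'' (left_mem_Icc.2 (hx.1.trans hx.2)) hy hax hxy (hmin x hx)

theorem MonotoneOn.tendsto_nhdsLT_sSup_image_Ico {f : ℝ → ℝ} {a b : ℝ} (hab : a < b)
    (hf : MonotoneOn f (Ico a b)) (hbdd : BddAbove (f '' Ico a b)) :
    Tendsto f (𝓝[<] b) (𝓝 (sSup (f '' Ico a b))) := by
  refine tendsto_order.2 ⟨fun l hl => ?_, fun m hm => ?_⟩
  · obtain ⟨_, ⟨z, hz, rfl⟩, hlz⟩ :=
      exists_lt_of_lt_csSup ((nonempty_Ico.2 hab).image f) hl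
    filter_upwards [Ioo_mem_nhdsLT hz.2] with w hw
    exact hlz.trans_le (hf hz ⟨hz.1.trans hw.1.le, hw.2⟩ hw.1.le)
  · filter_upwards [Ioo_mem_nhdsLT hab] with w hw
    exact (le_csSup hbdd (mem_image_of_mem f ⟨hw.1.le, hw.2⟩)).trans_lt hm

theorem MonotoneOn.eq_sSup_image_Ico_iff_tendsto {f : ℝ → ℝ} {a b : ℝ} (hab : a < b)
    (hf : MonotoneOn f (Icc a b)) :
    f b = sSup (f '' Ico a b) ↔ Tendsto f (𝓝[<] b) (𝓝 (f b)) := by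
  have hbdd : BddAbove (f '' Ico a b) := by
    refine ⟨f b, ?_⟩
    rintro _ ⟨x, hx, rfl⟩
    exact hf (Ico_subset_Icc_self hx) (right_mem_Icc.2 hab.le) hx.2.le
  have hlim := (hf.mono Ico_subset_Icc_self).tendsto_nhdsLT_sSup_image_Ico hab hbdd
  exact ⟨fun h => h ▸ hlim, fun h => tendsto_nhds_unique h hlim⟩

theorem ConvexOn.update_right_of_tendsto {f : ℝ → ℝ} {a b c : ℝ}
    (hf : ConvexOn ℝ (Icc a b) f) (hc : Tendsto f (𝓝[<] b) (𝓝 c)) :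
    ConvexOn ℝ (Icc a b) (update f b c) := by
  refine LinearOrder.convexOn_of_lt (convex_Icc a b) fun x hx y hy hxy p q hp hq hpq => ?_
  simp only [smul_eq_mul] at hf ⊢
  obtain rfl : p = 1 - q := by linarith
  have hxz : x < (1 - q) * x + q * y := by linarith [mul_pos hq (sub_pos.2 hxy)]
  have hzy : (1 - q) * x + q * y < y := by linarith [mul_pos hp (sub_pos.2 hxy)]
  rw [update_of_ne (hzy.trans_le hy.2).ne, update_of_ne (hxy.trans_le hy.2).ne]
  rcases hy.2.lt_or_eq with hyb | rfl
  · rw [update_of_ne hyb.ne]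
    simpa only [smul_eq_mul] using hf.2 hx hy hp.le hq.le hpq
  -- `y = b`: let the right point tend to `b`, using continuity of `f` inside `(a, b)`.
  rw [update_self]
  have hcont : ContinuousAt f ((1 - q) * x + q * y) := by
    refine hf.continuousOn_interior.continuousAt (isOpen_interior.mem_nhds ?_)
    rw [interior_Icc]
    exact ⟨hx.1.trans_lt hxz, hzy⟩
  have hlim :
      Tendsto (fun t => f ((1 - q) * x + q * t)) (𝓝[<] y) (𝓝 (f ((1 - q) * x + q * y))) :=
    hcont.tendsto.comp ((Continuous.tendsto (by fun_prop) y).mono_left nhdsWithin_le_nhds)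
  refine le_of_tendsto_of_tendsto hlim (tendsto_const_nhds.add (hc.const_mul q)) ?_
  filter_upwards [Ioo_mem_nhdsLT hxy] with t ht
  simpa only [smul_eq_mul] using hf.2 hx ⟨hx.1.trans ht.1.le, ht.2.le⟩ hp.le hq.le hpq

section Limsup

variable {ι : Type*} {l : Filter ι} [l.NeBot]

theorem Real.limsup_const_mul_of_nonneg {u : ι → ℝ} {c : ℝ} (hc : 0 ≤ c)
    (hu : IsBoundedUnder (· ≤ ·) l u) (hu' : IsBoundedUnder (· ≥ ·) l u) :
    limsup (fun i => c * u i) l = c * limsup u l :=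
  ((monotone_mul_left_of_nonneg hc).map_limsup_of_continuousAt u
    (continuous_const_mul c).continuousAt hu hu'.isCoboundedUnder_le).symm

theorem ConvexOn.limsup {E : Type*} [AddCommGroup E] [Module ℝ E] {s : Set E}
    {f : ι → E → ℝ} (hf : ∀ i, ConvexOn ℝ s (f i))
    (hbdd : ∀ x ∈ s, IsBoundedUnder (· ≤ ·) l (f · x))
    (hbdd' : ∀ x ∈ s, IsBoundedUnder (· ≥ ·) l (f · x)) :
    ConvexOn ℝ s fun x => Filter.limsup (f · x) l := by
  obtain ⟨i₀⟩ := l.nonempty_of_neBot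
  refine ⟨(hf i₀).1, fun x hx y hy a b ha hb hab => ?_⟩
  have hma := monotone_mul_left_of_nonneg ha
  have hmb := monotone_mul_left_of_nonneg hb
  calc Filter.limsup (f · (a • x + b • y)) l
      ≤ Filter.limsup (fun i => a * f i x + b * f i y) l :=
        limsup_le_limsup (Eventually.of_forall fun i => (hf i).2 hx hy ha hb hab)
          (hbdd' _ ((hf i₀).1 hx hy ha hb hab)).isCoboundedUnder_le
          (isBoundedUnder_le_add (hma.isBoundedUnder_le_comp (hbdd x hx))
            (hmb.isBoundedUnder_le_comp (hbdd y hy)))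
    _ ≤ Filter.limsup (fun i => a * f i x) l + Filter.limsup (fun i => b * f i y) l :=
        limsup_add_le (hma.isBoundedUnder_ge_comp (hbdd' x hx))
          (hma.isBoundedUnder_le_comp (hbdd x hx))
          (hmb.isBoundedUnder_ge_comp (hbdd' y hy)).isCoboundedUnder_le
          (hmb.isBoundedUnder_le_comp (hbdd y hy))
    _ = a • Filter.limsup (f · x) l + b • Filter.limsup (f · y) l := by
        rw [Real.limsup_const_mul_of_nonneg ha (hbdd x hx) (hbdd' x hx),
          Real.limsup_const_mul_of_nonneg hb (hbdd y hy) (hbdd' y hy)]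
        rfl

end Limsup

theorem MonotoneOn.monotone_comp_projIcc {f : ℝ → ℝ} {a b : ℝ} (h : a ≤ b)
    (hf : MonotoneOn f (Icc a b)) : Monotone fun x => f (projIcc a b h x) :=
  fun _ _ hxy => hf (projIcc a b h _).2 (projIcc a b h _).2 (monotone_projIcc h hxy)

theorem Monotone.integral_sub_comp_sub_le {f : ℝ → ℝ} (hf : Monotone f) {m M : ℝ}
    (hm : ∀ x, m ≤ f x) (hM : ∀ x, f x ≤ M) (a b : ℝ) {h : ℝ} (hh : 0 ≤ h) :
    ∫ x in a..b, (f x - f (x - h)) ≤ h * (M - m) := by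
  have hint : ∀ c d : ℝ, IntervalIntegrable f volume c d := fun _ _ => hf.intervalIntegrable
  have hshift : Monotone fun x => f (x - h) := fun _ _ hxy => hf (sub_le_sub_right hxy h)
  rw [intervalIntegral.integral_sub (hint a b) hshift.intervalIntegrable,
    intervalIntegral.integral_comp_sub_right,
    intervalIntegral.integral_interval_sub_interval_comm' (hint _ _) (hint _ _) (hint _ _)]
  have hupper : ∫ x in (b - h)..b, f x ≤ h * M := by
    simpa using intervalIntegral.integral_mono_on (sub_le_self b hh) (hint _ _)
      intervalIntegrable_const fun x _ => hM x
  have hlower : h * m ≤ ∫ x in (a - h)..a, f x := by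
    simpa using intervalIntegral.integral_mono_on (sub_le_self a hh) intervalIntegrable_const
      (hint _ _) fun x _ => hm x
  linarith

theorem abs_sub_le_of_abs_sub_grid_le {f g : ℝ → ℝ} (hf : Monotone f) (hg : Monotone g)
    {n : ℕ} (hn : 0 < n) {δ : ℝ} (hδ : ∀ k ≤ n, |f (k / n) - g (k / n)| ≤ δ) {x : ℝ}
    (hx : x ∈ Icc (0:ℝ) 1) :
    |f x - g x| ≤ (f x - f (x - 1 / n)) + (g x - g (x - 1 / n)) + δ := by
  have hn' : (0:ℝ) < n := Nat.cast_pos.2 hn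
  set k := ⌊n * x⌋₊
  have hkn : k ≤ n := Nat.floor_le_of_le (mul_le_of_le_one_right hn'.le hx.2)
  have hkx : (k : ℝ) / n ≤ x := by
    rw [div_le_iff₀ hn', mul_comm]
    exact Nat.floor_le (mul_nonneg hn'.le hx.1)
  have hxk : x - 1 / n ≤ k / n := by
    rw [sub_le_iff_le_add, ← add_div, le_div_iff₀ hn', mul_comm]
    exact (Nat.lt_floor_add_one _).le
  have hgrid := abs_le.1 (hδ k hkn)
  have := hf hkx; have := hf hxk; have := hg hkx; have := hg hxk
  rw [abs_le]
  constructor <;> linarith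

theorem integral_abs_sub_le_of_abs_sub_grid_le {f g : ℝ → ℝ} (hf : Monotone f)
    (hg : Monotone g) (hf01 : ∀ x, f x ∈ Icc (0:ℝ) 1) (hg01 : ∀ x, g x ∈ Icc (0:ℝ) 1)
    {n : ℕ} (hn : 0 < n) {δ : ℝ} (hδ : ∀ k ≤ n, |f (k / n) - g (k / n)| ≤ δ) :
    ∫ x in (0:ℝ)..1, |f x - g x| ≤ 2 / n + δ := by
  have hinc : ∀ φ : ℝ → ℝ, Monotone φ →
      IntervalIntegrable (fun x => φ x - φ (x - 1 / n)) volume 0 1 := fun φ hφ =>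
    hφ.intervalIntegrable.sub (show Monotone fun x => φ (x - 1 / n) from
      fun _ _ hxy => hφ (sub_le_sub_right hxy _)).intervalIntegrable
  have hosc : ∀ φ : ℝ → ℝ, Monotone φ → (∀ x, φ x ∈ Icc (0:ℝ) 1) →
      ∫ x in (0:ℝ)..1, (φ x - φ (x - 1 / n)) ≤ 1 / n := fun φ hφ hφ01 => by
    simpa using hφ.integral_sub_comp_sub_le (fun x => (hφ01 x).1) (fun x => (hφ01 x).2) 0 1
      (by positivity : (0:ℝ) ≤ 1 / n)
  calc ∫ x in (0:ℝ)..1, |f x - g x|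
      ≤ ∫ x in (0:ℝ)..1, ((f x - f (x - 1 / n)) + (g x - g (x - 1 / n)) + δ) := by
        refine intervalIntegral.integral_mono_on zero_le_one
          (hf.intervalIntegrable.sub hg.intervalIntegrable).abs
          (((hinc f hf).add (hinc g hg)).add intervalIntegrable_const) fun x hx => ?_
        exact abs_sub_le_of_abs_sub_grid_le hf hg hn hδ hx
    _ = (∫ x in (0:ℝ)..1, (f x - f (x - 1 / n))) + (∫ x in (0:ℝ)..1, (g x - g (x - 1 / n)))
          + δ := by
        rw [intervalIntegral.integral_add ((hinc f hf).add (hinc g hg)) intervalIntegrable_const,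
          intervalIntegral.integral_add (hinc f hf) (hinc g hg)]
        simp
    _ ≤ 1 / n + 1 / n + δ := by gcongr <;> apply hosc <;> assumption
    _ = 2 / n + δ := by ring

theorem integral_Icc_abs_sub_le_of_abs_sub_grid_le {f g : ℝ → ℝ}
    (hf : MonotoneOn f (Icc 0 1)) (hg : MonotoneOn g (Icc 0 1))
    (hf01 : MapsTo f (Icc 0 1) (Icc 0 1))
    (hg01 : MapsTo g (Icc 0 1) (Icc 0 1)) {n : ℕ} (hn : 0 < n) {δ : ℝ}
    (hδ : ∀ k ≤ n, |f (k / n) - g (k / n)| ≤ δ) :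
    ∫ x in Icc (0:ℝ) 1, |f x - g x| ≤ 2 / n + δ := by
  have hext : ∀ φ : ℝ → ℝ, ∀ x ∈ Icc (0:ℝ) 1, φ (projIcc 0 1 zero_le_one x) = φ x :=
    fun φ x hx => by rw [projIcc_of_mem _ hx]
  have hgrid : ∀ k ≤ n, (k / n : ℝ) ∈ Icc (0:ℝ) 1 := fun k hk =>
    ⟨by positivity, div_le_one_of_le₀ (Nat.cast_le.2 hk) (Nat.cast_nonneg _)⟩
  rw [integral_Icc_eq_integral_Ioc, ← intervalIntegral.integral_of_le zero_le_one,
    intervalIntegral.integral_congr (g := fun x => |f (projIcc 0 1 zero_le_one x) -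
      g (projIcc 0 1 zero_le_one x)|) fun x hx => ?_]
  · refine integral_abs_sub_le_of_abs_sub_grid_le (hf.monotone_comp_projIcc zero_le_one)
      (hg.monotone_comp_projIcc zero_le_one) (fun x => hf01 (projIcc 0 1 _ x).2)
      (fun x => hg01 (projIcc 0 1 _ x).2) hn fun k hk => ?_
    rw [hext f _ (hgrid k hk), hext g _ (hgrid k hk)]
    exact hδ k hk
  · rw [uIcc_of_le zero_le_one] at hx
    simp only [hext f x hx, hext g x hx]

theorem abs_sub_lt_of_floor_mul_eq {c u v : ℝ} (hc : 0 < c) (hu : 0 ≤ u) (hv : 0 ≤ v)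
    (h : ⌊c * u⌋₊ = ⌊c * v⌋₊) : |u - v| < 1 / c := by
  have hfloor : ⌊c * u⌋ = ⌊c * v⌋ := by
    rw [← Int.natCast_floor_eq_floor (by positivity),
      ← Int.natCast_floor_eq_floor (by positivity), h]
  have := Int.abs_sub_lt_one_of_floor_eq_floor hfloor
  rwa [← mul_sub, abs_mul, abs_of_pos hc, ← lt_div_iff₀' hc] at this

theorem MeasureTheory.L1.dist_eq_integral_abs_sub {α : Type*} [MeasurableSpace α]
    {μ : Measure α} {f g : Lp ℝ 1 μ} {φ ψ : α → ℝ} (hf : f =ᵐ[μ] φ) (hg : g =ᵐ[μ] ψ) :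
    dist f g = ∫ x, |φ x - ψ x| ∂μ := by
  rw [dist_eq_norm, L1.norm_eq_integral_norm]
  refine integral_congr_ae ?_
  filter_upwards [Lp.coeFn_sub f g, hf, hg] with x hfg hfx hgx
  rw [hfg, Pi.sub_apply, hfx, hgx, Real.norm_eq_abs]

theorem totallyBounded_of_forall_ae_eq_monotoneOn
    {s : Set (Lp ℝ 1 (volume.restrict (Icc (0:ℝ) 1)))}
    (hs : ∀ f ∈ s, ∃ ℓ : ℝ → ℝ, MonotoneOn ℓ (Icc 0 1) ∧ MapsTo ℓ (Icc 0 1) (Icc 0 1) ∧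
      (⇑f : ℝ → ℝ) =ᵐ[volume.restrict (Icc (0:ℝ) 1)] ℓ) :
    TotallyBounded s := by
  refine Metric.totallyBounded_of_finite_discretization fun ε hε => ?_
  choose ℓ hmono hmaps hae using fun f : s => hs f f.2
  obtain ⟨n, hn⟩ := exists_nat_gt (3 / ε)
  have hn' : (0:ℝ) < n := (by positivity : (0:ℝ) < 3 / ε).trans hn
  have hgrid : ∀ k : Fin (n + 1), ((k : ℕ) / n : ℝ) ∈ Icc (0:ℝ) 1 := fun k =>
    ⟨by positivity, div_le_one_of_le₀ (Nat.cast_le.2 (Nat.lt_succ_iff.1 k.2)) hn'.le⟩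
  refine ⟨Fin (n + 1) → Fin (n + 1), inferInstance,
    fun f k => ⟨⌊n * ℓ f ((k : ℕ) / n)⌋₊, Nat.lt_succ_of_le
      (Nat.floor_le_of_le (mul_le_of_le_one_right hn'.le (hmaps f (hgrid k)).2))⟩,
    fun f g hfg => ?_⟩
  rw [L1.dist_eq_integral_abs_sub (hae f) (hae g)]
  calc ∫ x in Icc (0:ℝ) 1, |ℓ f x - ℓ g x| ≤ 2 / n + 1 / n := by
        refine integral_Icc_abs_sub_le_of_abs_sub_grid_le (hmono f) (hmono g) (hmaps f) (hmaps g)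
          (Nat.cast_pos.1 hn') fun k hk => ?_
        let k' : Fin (n + 1) := ⟨k, Nat.lt_succ_of_le hk⟩
        exact (abs_sub_lt_of_floor_mul_eq hn' (hmaps f (hgrid k')).1 (hmaps g (hgrid k')).1
          (congrArg Fin.val (congrFun hfg k'))).le
    _ < ε := by
        rw [← add_div, div_lt_iff₀ hn']
        rw [div_lt_iff₀ hε] at hn
        linarith

theorem gini_smul_add_smul {f g : ℝ → ℝ} (hf : IntervalIntegrable f volume 0 1)
    (hg : IntervalIntegrable g volume 0 1) {c d : ℝ} (hcd : c + d = 1) :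
    Gini (c • f + d • g) = c * Gini f + d * Gini g := by
  simp only [Gini, Pi.add_apply, Pi.smul_apply, smul_eq_mul]
  rw [intervalIntegral.integral_add (hf.const_mul c) (hg.const_mul d),
    intervalIntegral.integral_const_mul, intervalIntegral.integral_const_mul]
  linear_combination -hcd

namespace MemLorenz

variable {ℓ : ℝ → ℝ}

protected theorem convexOn (h : MemLorenz ℓ) : ConvexOn ℝ (Icc 0 1) ℓ := h.1

theorem mapsTo (h : MemLorenz ℓ) : MapsTo ℓ (Icc 0 1) (Icc 0 1) := h.2.1

theorem apply_zero (h : MemLorenz ℓ) : ℓ 0 = 0 := h.2.2.1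

theorem monotoneOn (h : MemLorenz ℓ) : MonotoneOn ℓ (Icc 0 1) :=
  h.convexOn.monotoneOn_Icc_of_left_le fun x hx => by rw [h.apply_zero]; exact (h.mapsTo hx).1

theorem intervalIntegrable (h : MemLorenz ℓ) : IntervalIntegrable ℓ volume 0 1 :=
  MonotoneOn.intervalIntegrable (by rw [uIcc_of_le zero_le_one]; exact h.monotoneOn)

theorem tendsto_nhdsLT_one (h : MemLorenz ℓ) : Tendsto ℓ (𝓝[<] 1) (𝓝 (ℓ 1)) :=
  (h.monotoneOn.eq_sSup_image_Ico_iff_tendsto zero_lt_one).1 h.2.2.2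

end MemLorenz

theorem convex_setOf_memLorenz : Convex ℝ {ℓ : ℝ → ℝ | MemLorenz ℓ} := by
  intro f hf g hg c d hc hd hcd
  have hmono : MonotoneOn (c • f + d • g) (Icc 0 1) := fun x hx y hy hxy =>
    add_le_add (smul_le_smul_of_nonneg_left (hf.monotoneOn hx hy hxy) hc)
      (smul_le_smul_of_nonneg_left (hg.monotoneOn hx hy hxy) hd)
  refine ⟨(hf.convexOn.smul hc).add (hg.convexOn.smul hd), fun x hx => ?_, ?_, ?_⟩
  · exact convex_Icc 0 1 (hf.mapsTo hx) (hg.mapsTo hx) hc hd hcd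
  · simp [hf.apply_zero, hg.apply_zero]
  · exact (hmono.eq_sSup_image_Ico_iff_tendsto zero_lt_one).2
      ((hf.tendsto_nhdsLT_one.const_smul c).add (hg.tendsto_nhdsLT_one.const_smul d))

theorem convex_setOf_memLorenz_gini_eq (a : ℝ) :
    Convex ℝ {ℓ : ℝ → ℝ | MemLorenz ℓ ∧ Gini ℓ = a} := by
  rintro f ⟨hf, hfa⟩ g ⟨hg, hga⟩ c d hc hd hcd
  refine ⟨convex_setOf_memLorenz hf hg hc hd hcd, ?_⟩
  rw [gini_smul_add_smul hf.intervalIntegrable hg.intervalIntegrable hcd, hfa, hga,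
    ← add_mul, hcd, one_mul]

theorem memLorenz_update_one_sSup {g : ℝ → ℝ} (hg : ConvexOn ℝ (Icc 0 1) g)
    (hmaps : MapsTo g (Icc 0 1) (Icc 0 1)) (h0 : g 0 = 0) :
    MemLorenz (update g 1 (sSup (g '' Ico 0 1))) := by
  have hmono : MonotoneOn g (Icc 0 1) :=
    hg.monotoneOn_Icc_of_left_le fun x hx => by rw [h0]; exact (hmaps hx).1
  have hbdd : BddAbove (g '' Ico 0 1) := by
    refine ⟨1, ?_⟩
    rintro _ ⟨x, hx, rfl⟩
    exact (hmaps (Ico_subset_Icc_self hx)).2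
  have hlim := (hmono.mono Ico_subset_Icc_self).tendsto_nhdsLT_sSup_image_Ico zero_lt_one hbdd
  have hL : sSup (g '' Ico 0 1) ∈ Icc (0 : ℝ) 1 := by
    refine isClosed_Icc.mem_of_tendsto hlim ?_
    filter_upwards [Ioo_mem_nhdsLT zero_lt_one] with x hx
    exact hmaps (Ioo_subset_Icc_self hx)
  refine ⟨hg.update_right_of_tendsto hlim, fun x hx => ?_, ?_, ?_⟩
  · rcases eq_or_ne x 1 with rfl | hx1
    · rwa [update_self]
    · rw [update_of_ne hx1]
      exact hmaps hx
  · rw [update_of_ne zero_ne_one, h0]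
  · rw [update_self]
    congr 1
    exact image_congr fun x (hx : x ∈ Ico 0 1) => (update_of_ne hx.2.ne _ _).symm

theorem gini_eq_of_ae_eq {f ℓ : ℝ → ℝ} (h : f =ᵐ[volume.restrict (Icc (0:ℝ) 1)] ℓ) :
    Gini ℓ = 1 - 2 * ∫ x in Icc (0:ℝ) 1, f x := by
  rw [Gini, intervalIntegral.integral_of_le zero_le_one, ← integral_Icc_eq_integral_Ioc,
    integral_congr_ae h]

theorem isClosed_setOf_ae_eq_memLorenz :
    IsClosed {f : Lp ℝ 1 (volume.restrict (Icc (0:ℝ) 1)) |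
      ∃ ℓ : ℝ → ℝ, MemLorenz ℓ ∧ (⇑f : ℝ → ℝ) =ᵐ[volume.restrict (Icc (0:ℝ) 1)] ℓ} := by
  refine IsSeqClosed.isClosed fun fs F hfs hlim => ?_
  choose ℓs hℓs hae using hfs
  obtain ⟨ns, -, hns⟩ := (tendstoInMeasure_of_tendsto_Lp hlim).exists_seq_tendsto_ae
  set g : ℝ → ℝ := fun x => limsup (fun i => ℓs (ns i) x) atTop
  have hle : ∀ x ∈ Icc (0:ℝ) 1, ∀ i, ℓs (ns i) x ∈ Icc (0:ℝ) 1 :=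
    fun x hx i => (hℓs (ns i)).mapsTo hx
  have hbdd : ∀ x ∈ Icc (0:ℝ) 1, IsBoundedUnder (· ≤ ·) atTop fun i => ℓs (ns i) x :=
    fun x hx => isBoundedUnder_of_eventually_le (a := 1) (.of_forall fun i => (hle x hx i).2)
  have hbdd' : ∀ x ∈ Icc (0:ℝ) 1, IsBoundedUnder (· ≥ ·) atTop fun i => ℓs (ns i) x :=
    fun x hx => isBoundedUnder_of_eventually_ge (a := 0) (.of_forall fun i => (hle x hx i).1)
  have hg : ConvexOn ℝ (Icc 0 1) g := ConvexOn.limsup (fun i => (hℓs (ns i)).convexOn) hbdd hbdd'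
  have hmaps : MapsTo g (Icc 0 1) (Icc 0 1) := fun x hx =>
    ⟨le_limsup_of_frequently_le (.of_forall fun i => (hle x hx i).1) (hbdd x hx),
      limsup_le_of_le (hbdd' x hx).isCoboundedUnder_le (.of_forall fun i => (hle x hx i).2)⟩
  have h0 : g 0 = 0 := by simp only [g, (hℓs _).apply_zero, limsup_const]
  refine ⟨_, memLorenz_update_one_sSup hg hmaps h0, ?_⟩
  filter_upwards [hns, ae_all_iff.2 hae, Measure.ae_ne _ 1] with x hx hxℓ hx1
  rw [update_of_ne hx1]
  simp only [hxℓ] at hx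
  exact hx.limsup_eq.symm

theorem isClosed_setOf_ae_eq_memLorenz_gini_eq (a : ℝ) :
    IsClosed {f : Lp ℝ 1 (volume.restrict (Icc (0:ℝ) 1)) |
      ∃ ℓ : ℝ → ℝ, MemLorenz ℓ ∧ Gini ℓ = a ∧
        (⇑f : ℝ → ℝ) =ᵐ[volume.restrict (Icc (0:ℝ) 1)] ℓ} := by
  convert isClosed_setOf_ae_eq_memLorenz.inter (isClosed_eq (g := fun _ => a)
    (f := fun f : Lp ℝ 1 (volume.restrict (Icc (0:ℝ) 1)) => 1 - 2 * ∫ x in Icc (0:ℝ) 1, f x)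
    (continuous_const.sub (continuous_const.mul continuous_integral)) continuous_const) using 1
  ext f
  constructor
  · rintro ⟨ℓ, hℓ, rfl, hf⟩
    exact ⟨⟨ℓ, hℓ, hf⟩, (gini_eq_of_ae_eq hf).symm⟩
  · rintro ⟨⟨ℓ, hℓ, hf⟩, ha⟩
    exact ⟨ℓ, hℓ, (gini_eq_of_ae_eq hf).trans ha, hf⟩

theorem La_convex_and_compact_general (a : ℝ) :
    Convex ℝ {ℓ : ℝ → ℝ | MemLorenz ℓ ∧ Gini ℓ = a} ∧
    IsCompact {f : Lp ℝ 1 (volume.restrict (Icc (0:ℝ) 1)) |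
      ∃ ℓ : ℝ → ℝ, MemLorenz ℓ ∧ Gini ℓ = a ∧
        (⇑f : ℝ → ℝ) =ᵐ[volume.restrict (Icc (0:ℝ) 1)] ℓ} := by
  refine ⟨convex_setOf_memLorenz_gini_eq a,
    TotallyBounded.isCompact_of_isClosed ?_ (isClosed_setOf_ae_eq_memLorenz_gini_eq a)⟩
  exact totallyBounded_of_forall_ae_eq_monotoneOn fun _ ⟨ℓ, hℓ, _, hae⟩ =>
    ⟨ℓ, hℓ.monotoneOn, hℓ.mapsTo, hae⟩

/-- For each `a ∈ [0,1]`, the set `L_a = {ℓ ∈ L : G(ℓ) = a}` is convex, and it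
is compact as a subset of `L¹([0,1])`. -/
theorem La_convex_and_compact (a : ℝ) (ha : a ∈ Icc (0:ℝ) 1) :
    Convex ℝ {ℓ : ℝ → ℝ | MemLorenz ℓ ∧ Gini ℓ = a} ∧
    IsCompact {f : Lp ℝ 1 (volume.restrict (Icc (0:ℝ) 1)) |
      ∃ ℓ : ℝ → ℝ, MemLorenz ℓ ∧ Gini ℓ = a ∧
        (⇑f : ℝ → ℝ) =ᵐ[volume.restrict (Icc (0:ℝ) 1)] ℓ} :=
  La_convex_and_compact_general a
end

section
/- For 0 ≤ a, b ≤ 1 with (a,b) ≠ (0,0), the Lorenz distance between the extremal curves ℓ_a⁻ and ℓ_b⁺ equals ((1-a)b² + (1-b)a²)/(a + b - ab), i.e., 2∫₀¹ |ℓ_a⁻(t) - ℓ_b⁺(t)| dt = ((1-a)b² + (1-b)a²)/(a + b - ab). -/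
open Set

/-- The curve `ℓ_a⁻(t) = max {0, (t-a)/(1-a)}` for `a < 1`, with the convention
that `ℓ₁⁻` is the indicator of `{1}` (perfect inequality curve). -/
noncomputable def laMinus (a : ℝ) : ℝ → ℝ :=
  fun t => if a = 1 then (if t = 1 then 1 else 0) else max 0 ((t - a) / (1 - a))

/-- The curve `ℓ_b⁺`: `ℓ_b⁺(t) = (1-b)t` on `[0,1)` and `ℓ_b⁺(1) = 1`. -/
noncomputable def lbPlus (b : ℝ) : ℝ → ℝ := fun t => if t = 1 then 1 else (1 - b) * t

/-!
Off the null set `{1}` both curves are piecewise linear, so the region under `|ℓ_a⁻ - ℓ_b⁺|`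
consists of three triangles: over `[0, a]` (heights `0` and `(1-b)a`), over `[a, t₀]` (heights
`(1-b)a` and `0`) and over `[t₀, 1]` (heights `0` and `b`), where `t₀ = a / (a + b - ab)` is the
point at which `ℓ_a⁻` crosses `ℓ_b⁺`. Twice the total area is `(1-b)a t₀ + b(1-t₀)`.
-/

open MeasureTheory intervalIntegral

theorem intervalIntegral.integral_eq_of_eqOn_affine {g : ℝ → ℝ} {x y c d : ℝ} (hxy : x ≤ y)
    (h : EqOn g (fun t => c * t + d) (Icc x y)) :
    ∫ t in x..y, g t = c * (y ^ 2 - x ^ 2) / 2 + d * (y - x) := by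
  rw [integral_congr (uIcc_of_le hxy ▸ h),
    integral_add ((continuous_const_mul c).intervalIntegrable _ _) intervalIntegrable_const,
    integral_const_mul, integral_id, integral_const, smul_eq_mul]
  ring

theorem laMinus_ae_eq (a : ℝ) : laMinus a =ᵐ[volume] fun t => max 0 ((t - a) / (1 - a)) := by
  filter_upwards [compl_mem_ae_iff.mpr (Real.volume_singleton (a := 1))] with t ht
  rcases eq_or_ne a 1 with rfl | ha
  · simp_all [laMinus]
  · simp [laMinus, ha]

theorem lbPlus_ae_eq (b : ℝ) : lbPlus b =ᵐ[volume] fun t => (1 - b) * t := by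
  filter_upwards [compl_mem_ae_iff.mpr (Real.volume_singleton (a := 1))] with t ht
  simp_all [lbPlus]

/-- A continuous representative of `|ℓ_a⁻ - ℓ_b⁺|`; for `a = 1` the junk value `(t - 1) / 0 = 0`
makes it `(1-b)t`, which agrees with `|ℓ₁⁻ - ℓ_b⁺|` off `t = 1`. -/
noncomputable def lorenzGap (a b t : ℝ) : ℝ := |max 0 ((t - a) / (1 - a)) - (1 - b) * t|

theorem integral_abs_laMinus_sub_lbPlus (a b x y : ℝ) :
    ∫ t in x..y, |laMinus a t - lbPlus b t| = ∫ t in x..y, lorenzGap a b t := by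
  refine integral_congr_ae ?_
  filter_upwards [laMinus_ae_eq a, lbPlus_ae_eq b] with t ha hb _
  rw [ha, hb, lorenzGap]

theorem continuous_lorenzGap (a b : ℝ) : Continuous (lorenzGap a b) := by
  unfold lorenzGap
  fun_prop

noncomputable def crossPt (a b : ℝ) : ℝ := a / (a + b - a * b)

section

variable {a b t : ℝ}

theorem add_sub_mul_pos (ha : a ∈ Icc (0:ℝ) 1) (hb : b ∈ Icc (0:ℝ) 1) (hab : ¬(a = 0 ∧ b = 0)) :
    0 < a + b - a * b := by
  obtain ⟨ha0, ha1⟩ := ha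
  obtain ⟨hb0, hb1⟩ := hb
  rcases hb0.lt_or_eq with hb0 | rfl
  · nlinarith
  · have : 0 < a := ha0.lt_of_ne fun h => hab ⟨h.symm, rfl⟩
    linarith

theorem crossPt_mul_add_sub_mul (hD : 0 < a + b - a * b) : crossPt a b * (a + b - a * b) = a :=
  div_mul_cancel₀ a hD.ne'

theorem le_crossPt (ha0 : 0 ≤ a) (ha1 : a ≤ 1) (hb1 : b ≤ 1) (hD : 0 < a + b - a * b) :
    a ≤ crossPt a b := by
  rw [crossPt, le_div_iff₀ hD]
  nlinarith [mul_nonneg (mul_nonneg ha0 (sub_nonneg.mpr ha1)) (sub_nonneg.mpr hb1)]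

theorem crossPt_le_one (ha1 : a ≤ 1) (hb0 : 0 ≤ b) (hD : 0 < a + b - a * b) : crossPt a b ≤ 1 := by
  rw [crossPt, div_le_one hD]
  nlinarith [mul_nonneg hb0 (sub_nonneg.mpr ha1)]

theorem lorenzGap_of_le_left (ha1 : a ≤ 1) (hb1 : b ≤ 1) (ht0 : 0 ≤ t) (hta : t ≤ a) :
    lorenzGap a b t = (1 - b) * t := by
  have hmax : max 0 ((t - a) / (1 - a)) = 0 :=
    max_eq_left (div_nonpos_of_nonpos_of_nonneg (by linarith) (by linarith))
  rw [lorenzGap, hmax, zero_sub, abs_neg, abs_of_nonneg (by nlinarith)]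

theorem lorenzGap_of_le_right (ha1 : a < 1) (hat : a ≤ t) :
    lorenzGap a b t = |t * (a + b - a * b) - a| / (1 - a) := by
  have h1a : 0 < 1 - a := by linarith
  have hmax : max 0 ((t - a) / (1 - a)) = (t - a) / (1 - a) :=
    max_eq_right (div_nonneg (by linarith) h1a.le)
  rw [lorenzGap, hmax, ← abs_of_pos h1a, ← abs_div, abs_of_pos h1a]
  congr 1
  field_simp
  ring

theorem integral_lorenzGap_zero_left (ha0 : 0 ≤ a) (ha1 : a ≤ 1) (hb1 : b ≤ 1) :
    ∫ t in (0:ℝ)..a, lorenzGap a b t = (1 - b) * a ^ 2 / 2 := by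
  rw [integral_eq_of_eqOn_affine ha0 (c := 1 - b) (d := 0) fun t ht =>
    (lorenzGap_of_le_left ha1 hb1 ht.1 ht.2).trans (add_zero _).symm]
  ring

theorem integral_lorenzGap_left_crossPt (ha0 : 0 ≤ a) (ha1 : a < 1) (hb1 : b ≤ 1)
    (hD : 0 < a + b - a * b) :
    ∫ t in a..crossPt a b, lorenzGap a b t = (crossPt a b - a) * ((1 - b) * a) / 2 := by
  have h1a : 1 - a ≠ 0 := by linarith
  rw [integral_eq_of_eqOn_affine (le_crossPt ha0 ha1.le hb1 hD)
    (c := -((a + b - a * b) / (1 - a))) (d := a / (1 - a)) fun t ht => by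
      have htD : t * (a + b - a * b) ≤ a := (le_div_iff₀ hD).mp ht.2
      rw [lorenzGap_of_le_right ha1 ht.1, abs_of_nonpos (by linarith)]
      field_simp
      ring]
  rw [crossPt]
  field_simp
  ring

theorem integral_lorenzGap_crossPt_one (ha0 : 0 ≤ a) (ha1 : a < 1) (hb0 : 0 ≤ b) (hb1 : b ≤ 1)
    (hD : 0 < a + b - a * b) :
    ∫ t in crossPt a b..1, lorenzGap a b t = (1 - crossPt a b) * b / 2 := by
  have h1a : 1 - a ≠ 0 := by linarith
  rw [integral_eq_of_eqOn_affine (crossPt_le_one ha1.le hb0 hD)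
    (c := (a + b - a * b) / (1 - a)) (d := -(a / (1 - a))) fun t ht => by
      have htD : a ≤ t * (a + b - a * b) := (div_le_iff₀ hD).mp ht.1
      rw [lorenzGap_of_le_right ha1 ((le_crossPt ha0 ha1.le hb1 hD).trans ht.1),
        abs_of_nonneg (by linarith)]
      field_simp
      ring]
  rw [crossPt]
  field_simp
  ring

end

/-- For `0 ≤ a, b ≤ 1` with `(a,b) ≠ (0,0)`,
`2∫₀¹ |ℓ_a⁻ - ℓ_b⁺| = ((1-a)b² + (1-b)a²)/(a + b - ab)`. -/
theorem dist_laMinus_lbPlus (a b : ℝ) (ha : a ∈ Icc (0:ℝ) 1) (hb : b ∈ Icc (0:ℝ) 1)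
    (hab : ¬(a = 0 ∧ b = 0)) :
    2 * ∫ t in (0:ℝ)..1, |laMinus a t - lbPlus b t| =
      ((1 - a) * b ^ 2 + (1 - b) * a ^ 2) / (a + b - a * b) := by
  have hD := add_sub_mul_pos ha hb hab
  obtain ⟨ha0, ha1⟩ := ha
  obtain ⟨hb0, hb1⟩ := hb
  rw [integral_abs_laMinus_sub_lbPlus]
  rcases ha1.lt_or_eq with ha1 | rfl
  · have integrable (x y : ℝ) := (continuous_lorenzGap a b).intervalIntegrable (μ := volume) x y
    rw [← integral_add_adjacent_intervals (integrable 0 a) (integrable a 1),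
      ← integral_add_adjacent_intervals (integrable a (crossPt a b)) (integrable _ 1),
      integral_lorenzGap_zero_left ha0 ha1.le hb1, integral_lorenzGap_left_crossPt ha0 ha1 hb1 hD,
      integral_lorenzGap_crossPt_one ha0 ha1 hb0 hb1 hD, eq_div_iff hD.ne']
    linear_combination ((1 - b) * a - b) * crossPt_mul_add_sub_mul hD
  · rw [integral_lorenzGap_zero_left zero_le_one le_rfl hb1]
    ring
end

section
/- The map δ : L¹([0,1]) → ℝ given by δ(f) = ∫₀¹ |f| is Hadamard directionally differentiable at every f ∈ L¹, with directional derivative δ'_f(g) = ∫_{f=0} |g| + ∫_{f≠0} g · sgn(f). Moreover, if the set {f = 0} has Lebesgue measure zero, then δ'_f is linear: δ'_f(g) = ∫₀¹ g · sgn(f). -/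
/-!
Pointwise, `(|a + t b| - |a|) / t` is bounded by `|b|` and tends, as `t ↓ 0`, to `|b|` if `a = 0`
and to `b · sgn a` otherwise; dominated convergence then gives the one-sided derivative of the
`L¹` norm along straight lines. As the norm is `1`-Lipschitz, replacing the direction `h` by
`hₙ → h` moves the difference quotient by at most `‖hₙ - h‖`, which upgrades this to Hadamard
differentiability. If `{f = 0}` is null, the derivative is integration against `sgn f`, hence linear.
-/

open Set MeasureTheory Filter Topology

noncomputable section

/-- The underlying measure: Lebesgue measure restricted to `[0,1]`. -/
def μ01 : Measure ℝ := volume.restrict (Icc (0:ℝ) 1)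

/-- The directional derivative of the `L¹` norm at `f` in direction `g`:
`δ'_f(g) = ∫_{f=0} |g| + ∫_{f≠0} g · sgn(f)`. -/
def deltaDeriv (f g : Lp ℝ 1 μ01) : ℝ :=
  (∫ x in {x : ℝ | (f : ℝ → ℝ) x = 0}, |(g : ℝ → ℝ) x| ∂μ01) +
  (∫ x in {x : ℝ | (f : ℝ → ℝ) x ≠ 0},
    (g : ℝ → ℝ) x * Real.sign ((f : ℝ → ℝ) x) ∂μ01)

lemma Real.abs_sign_le_one (r : ℝ) : |Real.sign r| ≤ 1 := by
  rcases Real.sign_apply_eq r with h | h | h <;> simp [h]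

lemma Real.measurable_sign : Measurable Real.sign :=
  Measurable.ite measurableSet_Iio measurable_const
    (Measurable.ite measurableSet_Ioi measurable_const measurable_const)

/-- The right derivative at `0` of `t ↦ |a + t * b|`. -/
def absDirDeriv (a b : ℝ) : ℝ := if a = 0 then |b| else b * Real.sign a

lemma abs_absDirDeriv_le (a b : ℝ) : |absDirDeriv a b| ≤ |b| := by
  unfold absDirDeriv
  split_ifs
  · rw [abs_abs]
  · rw [abs_mul]
    exact mul_le_of_le_one_right (abs_nonneg b) (Real.abs_sign_le_one a)

lemma abs_abs_add_mul_sub_abs_div_le (a b : ℝ) {t : ℝ} (ht : 0 < t) :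
    |(|a + t * b| - |a|) / t| ≤ |b| := by
  rw [abs_div, abs_of_pos ht, div_le_iff₀ ht]
  calc |(|a + t * b| - |a|)| ≤ |a + t * b - a| := abs_abs_sub_abs_le_abs_sub _ _
    _ = |b| * t := by rw [add_sub_cancel_left, abs_mul, abs_of_pos ht, mul_comm]

lemma tendsto_abs_add_mul_sub_abs_div (a b : ℝ) :
    Tendsto (fun t => (|a + t * b| - |a|) / t) (𝓝[>] 0) (𝓝 (absDirDeriv a b)) := by
  unfold absDirDeriv
  split_ifs with ha
  · refine tendsto_const_nhds.congr' (eventually_nhdsWithin_of_forall fun t (ht : 0 < t) => ?_)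
    dsimp only
    rw [ha, zero_add, abs_zero, sub_zero, abs_mul, abs_of_pos ht, mul_div_cancel_left₀ _ ht.ne']
  · have hderiv : HasDerivAt (fun t => |a + t * b|) (b * Real.sign a) 0 := by
      have := (hasDerivAt_abs (x := a + 0 * b) (by simpa using ha)).comp (0 : ℝ)
        (((hasDerivAt_id (0 : ℝ)).mul_const b).const_add a)
      rcases lt_or_gt_of_ne ha with hneg | hpos
      · simpa [hneg, Real.sign_of_neg, mul_comm, Function.comp_def] using this
      · simpa [hpos, Real.sign_of_pos, mul_comm, Function.comp_def] using this
    simpa [div_eq_inv_mul] using hderiv.tendsto_slope_zero_right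

lemma Measurable.absDirDeriv {α : Type*} [MeasurableSpace α] {f g : α → ℝ}
    (hf : Measurable f) (hg : Measurable g) : Measurable fun x => absDirDeriv (f x) (g x) :=
  Measurable.ite (hf (measurableSet_singleton 0)) hg.abs (hg.mul (Real.measurable_sign.comp hf))

lemma LipschitzWith.tendsto_slope_of_tendsto_slope_nhdsGT {E : Type*}
    [SeminormedAddCommGroup E] [NormedSpace ℝ E] {φ : E → ℝ} {K : NNReal}
    (hφ : LipschitzWith K φ) {x h : E} {d : ℝ}
    (hd : Tendsto (fun t => (φ (x + t • h) - φ x) / t) (𝓝[>] 0) (𝓝 d))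
    {ι : Type*} {l : Filter ι} {t : ι → ℝ} {k : ι → E}
    (ht : Tendsto t l (𝓝[>] 0)) (hk : Tendsto k l (𝓝 h)) :
    Tendsto (fun n => (φ (x + t n • k n) - φ x) / t n) l (𝓝 d) := by
  have hdiff : Tendsto (fun n => (φ (x + t n • k n) - φ (x + t n • h)) / t n) l (𝓝 0) := by
    have hbound : Tendsto (fun n => K * ‖k n - h‖) l (𝓝 0) := by
      simpa using (tendsto_iff_norm_sub_tendsto_zero.1 hk).const_mul (K : ℝ)
    refine squeeze_zero_norm' ?_ hbound
    filter_upwards [ht self_mem_nhdsWithin] with n (hn : 0 < t n)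
    rw [Real.norm_eq_abs, abs_div, abs_of_pos hn, div_le_iff₀ hn]
    calc |φ (x + t n • k n) - φ (x + t n • h)|
        ≤ K * dist (x + t n • k n) (x + t n • h) := hφ.dist_le_mul _ _
      _ = K * ‖k n - h‖ * t n := by
        rw [dist_add_left, dist_eq_norm, ← smul_sub, norm_smul, Real.norm_of_nonneg hn.le]
        ring
  simpa [sub_div] using hdiff.add (hd.comp ht)

section L1

variable {α : Type*} [MeasurableSpace α] {μ : Measure α}

lemma L1.norm_add_smul_eq_integral (f h : Lp ℝ 1 μ) (t : ℝ) :
    ‖f + t • h‖ = ∫ x, |f x + t * h x| ∂μ := by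
  rw [L1.norm_eq_integral_norm]
  refine integral_congr_ae ?_
  filter_upwards [Lp.coeFn_add f (t • h), Lp.coeFn_smul t h] with x hadd hsmul
  rw [hadd, Pi.add_apply, hsmul, Pi.smul_apply, smul_eq_mul, Real.norm_eq_abs]

lemma L1.tendsto_norm_add_smul_sub_norm_div (f h : Lp ℝ 1 μ) :
    Tendsto (fun t => (‖f + t • h‖ - ‖f‖) / t) (𝓝[>] 0)
      (𝓝 (∫ x, absDirDeriv (f x) (h x) ∂μ)) := by
  have hf : Integrable f μ := L1.integrable_coeFn f
  have hh : Integrable h μ := L1.integrable_coeFn h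
  have hquot : ∀ t : ℝ, (‖f + t • h‖ - ‖f‖) / t = ∫ x, (|f x + t * h x| - |f x|) / t ∂μ := by
    intro t
    have hA : Integrable (fun x => |f x + t * h x|) μ := (hf.add (hh.const_mul t)).abs
    rw [integral_div, integral_sub hA hf.abs,
      L1.norm_add_smul_eq_integral, L1.norm_eq_integral_norm]
    simp only [Real.norm_eq_abs]
  simp only [hquot]
  refine tendsto_integral_filter_of_dominated_convergence (fun x => |h x|)
    (Eventually.of_forall fun t =>
      (((hf.add (hh.const_mul t)).abs.sub hf.abs).div_const t).aestronglyMeasurable)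
    ?_ hh.abs (Eventually.of_forall fun x => tendsto_abs_add_mul_sub_abs_div _ _)
  filter_upwards [self_mem_nhdsWithin] with t (ht : 0 < t)
  exact Eventually.of_forall fun x => abs_abs_add_mul_sub_abs_div_le _ _ ht

lemma integral_absDirDeriv (f g : Lp ℝ 1 μ) :
    ∫ x, absDirDeriv (f x) (g x) ∂μ =
      (∫ x in {x | f x = 0}, |g x| ∂μ) + ∫ x in {x | f x ≠ 0}, g x * Real.sign (f x) ∂μ := by
  have hfm : Measurable f := (Lp.stronglyMeasurable f).measurable
  have hzero : MeasurableSet {x | f x = 0} := hfm (measurableSet_singleton 0)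
  have hint : Integrable (fun x => absDirDeriv (f x) (g x)) μ :=
    (L1.integrable_coeFn g).abs.mono'
      (hfm.absDirDeriv (Lp.stronglyMeasurable g).measurable).aestronglyMeasurable
      (Eventually.of_forall fun x => (Real.norm_eq_abs _).trans_le (abs_absDirDeriv_le _ _))
  rw [← integral_add_compl hzero hint]
  congr 1
  · exact setIntegral_congr_fun hzero fun x hx => if_pos hx
  · exact setIntegral_congr_fun hzero.compl fun x hx => if_neg hx

lemma integral_absDirDeriv_of_measure_zero {f : Lp ℝ 1 μ} (hf : μ {x | f x = 0} = 0)
    (g : Lp ℝ 1 μ) :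
    ∫ x, absDirDeriv (f x) (g x) ∂μ = ∫ x, g x * Real.sign (f x) ∂μ := by
  refine integral_congr_ae ?_
  filter_upwards [measure_eq_zero_iff_ae_notMem.1 hf] with x hx
  exact if_neg hx

lemma isLinearMap_integral_mul_sign (f : Lp ℝ 1 μ) :
    IsLinearMap ℝ fun g : Lp ℝ 1 μ => ∫ x, g x * Real.sign (f x) ∂μ := by
  have hint : ∀ g : Lp ℝ 1 μ, Integrable (fun x => g x * Real.sign (f x)) μ := fun g =>
    (L1.integrable_coeFn g).mul_bdd
      (Real.measurable_sign.comp (Lp.stronglyMeasurable f).measurable).aestronglyMeasurable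
      (Eventually.of_forall fun x => (Real.norm_eq_abs _).trans_le (Real.abs_sign_le_one _))
  constructor
  · intro g₁ g₂
    rw [← integral_add (hint g₁) (hint g₂)]
    refine integral_congr_ae ?_
    filter_upwards [Lp.coeFn_add g₁ g₂] with x hx
    rw [hx, Pi.add_apply, add_mul]
  · intro c g
    rw [smul_eq_mul, ← integral_const_mul]
    refine integral_congr_ae ?_
    filter_upwards [Lp.coeFn_smul c g] with x hx
    rw [hx, Pi.smul_apply, smul_eq_mul, mul_assoc]

end L1

/-- The map `δ(f) = ∫₀¹ |f| = ‖f‖_{L¹}` is Hadamard directionally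
differentiable at every `f ∈ L¹([0,1])` with derivative `δ'_f` as above;
moreover, if `{f = 0}` has measure zero then `δ'_f` is linear and
`δ'_f(g) = ∫₀¹ g · sgn(f)`. -/
theorem l1norm_hadamard_directional_diff (f : Lp ℝ 1 μ01) :
    (∀ (h : Lp ℝ 1 μ01) (hn : ℕ → Lp ℝ 1 μ01) (tn : ℕ → ℝ),
      (∀ n, 0 < tn n) → Tendsto tn atTop (𝓝 0) → Tendsto hn atTop (𝓝 h) →
      Tendsto (fun n => (‖f + tn n • hn n‖ - ‖f‖) / tn n) atTop
        (𝓝 (deltaDeriv f h))) ∧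
    (μ01 {x : ℝ | (f : ℝ → ℝ) x = 0} = 0 →
      IsLinearMap ℝ (deltaDeriv f) ∧
      ∀ g : Lp ℝ 1 μ01,
        deltaDeriv f g =
          ∫ x, (g : ℝ → ℝ) x * Real.sign ((f : ℝ → ℝ) x) ∂μ01) := by
  have hdeltaDeriv : ∀ g, deltaDeriv f g = ∫ x, absDirDeriv (f x) (g x) ∂μ01 := fun g =>
    (integral_absDirDeriv f g).symm
  refine ⟨fun h hn tn htpos ht hhn => ?_, fun hnull => ?_⟩
  · rw [hdeltaDeriv]
    exact lipschitzWith_one_norm.tendsto_slope_of_tendsto_slope_nhdsGT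
      (L1.tendsto_norm_add_smul_sub_norm_div f h)
      (tendsto_nhdsWithin_iff.2 ⟨ht, .of_forall htpos⟩) hhn
  · have hsign : ∀ g, deltaDeriv f g = ∫ x, g x * Real.sign (f x) ∂μ01 := fun g =>
      (hdeltaDeriv g).trans (integral_absDirDeriv_of_measure_zero hnull g)
    rw [funext hsign]
    exact ⟨isLinearMap_integral_mul_sign f, fun g => rfl⟩

end
end
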